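/- Let (G,B,m,w) be a connected weighted finite graph with boundary such that: (1) B = {x₀, x₁} has exactly two vertices and m_{x₀} = m_{x₁} = m₀; (2) there is a unique path P : v₀ = x₀ ∼ v₁ ∼ ⋯ ∼ v_{d_B} = x₁ in G joining x₀ and x₁, its length is d_B, and w_{v_{i−1}v_i} = w₀ for i = 1, …, d_B; (3) G is a comb over P. Then equality σ₂ = w₀·V_B / ((V_B − m₀)² · d_B) holds. -/

import Mathlib

open Finset

variable {V : Type*}

/-- The Dirichlet energy `⟨du,du⟩ = ∑_{{x,y}∈E} (u y - u x)^2 w_{xy}` of a function `u`,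
where the edge weight `w` is symmetric and vanishes on non-adjacent pairs. -/
noncomputable def energy [Fintype V] (w : V → V → ℝ) (u : V → ℝ) : ℝ :=
  (1 / 2) * ∑ x, ∑ y, (u y - u x) ^ 2 * w x y

/-- The Dirichlet pairing `⟨du,dv⟩ = ∑_{{x,y}∈E} (u y - u x)(v y - v x) w_{xy}`. -/
noncomputable def dirPairing [Fintype V] (w : V → V → ℝ) (u v : V → ℝ) : ℝ :=
  (1 / 2) * ∑ x, ∑ y, (u y - u x) * (v y - v x) * w x y

/-- The weighted graph Laplacian `Δu(x) = (1/m_x) ∑_y (u y - u x) w_{xy}`. -/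
noncomputable def glap [Fintype V] (m : V → ℝ) (w : V → V → ℝ) (u : V → ℝ) (x : V) : ℝ :=
  (1 / m x) * ∑ y, (u y - u x) * w x y

/-- `d_B`, the maximal graph distance between two boundary vertices. -/
noncomputable def boundaryDiam (G : SimpleGraph V) (B : Finset V) : ℕ :=
  (B ×ˢ B).sup fun p => G.dist p.1 p.2

/-- `w₀`, the minimal edge weight. -/
noncomputable def minEdgeWeight (G : SimpleGraph V) (w : V → V → ℝ) : ℝ :=
  sInf {r : ℝ | ∃ x y, G.Adj x y ∧ w x y = r}

/-- `m₀`, the minimal vertex measure on the boundary. -/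
noncomputable def minBoundaryMeasure (B : Finset V) (m : V → ℝ) : ℝ :=
  sInf {r : ℝ | ∃ x ∈ B, m x = r}

/-- The second Steklov eigenvalue `σ₂`, via its variational characterization: the infimum of
the Rayleigh quotients `E(u)/⟨u,u⟩_B` over functions `u` on `V` whose boundary values are
nonzero and have weighted mean zero.  (Since the harmonic extension minimizes the Dirichlet
energy among all extensions of given boundary data, this agrees with the second eigenvalue of
the Steklov operator.) -/
noncomputable def sigma2 [Fintype V] (B : Finset V) (m : V → ℝ) (w : V → V → ℝ) : ℝ :=
  sInf {r : ℝ | ∃ u : V → ℝ, (∃ x ∈ B, u x ≠ 0) ∧ (∑ x ∈ B, u x * m x = 0) ∧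
    r = energy w u / ∑ x ∈ B, (u x) ^ 2 * m x}

/-!
With `n = d_B` and `M = m x₀`, a function with weighted boundary mean zero takes opposite values
`a, -a` at `x₀, x₁`, so its Rayleigh quotient is `E(u) / (2 a² M)`. Keeping only the `n` edges of
the path, each of weight `w₀`, and applying Cauchy–Schwarz to the telescoping sum of increments
gives `E(u) ≥ w₀ (u x₁ - u x₀)² / n`, hence `σ₂ ≥ 2 w₀ / (n M)`, which is the right-hand side.
The comb condition makes this sharp: sending each vertex to the position along the path of the
path vertex it reaches without using path edges (there is at most one) gives a potential that is
linear on the path and constant on every tooth, so only the path edges carry energy and equality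
holds.
-/

namespace SimpleGraph.Walk

variable {G : SimpleGraph V} {a b : V}

theorem sum_darts_sub (p : G.Walk a b) (f : V → ℝ) :
    (p.darts.map fun d => f d.snd - f d.fst).sum = f b - f a := by
  induction p with
  | nil => simp
  | cons h q ih =>
    rw [darts_cons, List.map_cons, List.sum_cons, ih]
    ring

theorem IsPath.idxOf_end [DecidableEq V] {p : G.Walk a b} (hp : p.IsPath) :
    p.support.idxOf b = p.length := by
  induction p with
  | nil => simp
  | @cons a c b h q ih =>
    rw [cons_isPath_iff] at hp
    have hab : a ≠ b := fun hab => hp.2 (hab ▸ q.end_mem_support)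
    rw [support_cons, List.idxOf_cons_ne _ hab, ih hp.1, length_cons]

theorem IsPath.idxOf_snd_of_mem_darts [DecidableEq V] {p : G.Walk a b} (hp : p.IsPath)
    {d : G.Dart} (hd : d ∈ p.darts) :
    p.support.idxOf d.snd = p.support.idxOf d.fst + 1 := by
  induction p with
  | nil => simp at hd
  | @cons a c b h q ih =>
    rw [cons_isPath_iff] at hp
    rw [darts_cons, List.mem_cons] at hd
    rcases hd with rfl | hd
    · rw [support_cons, List.idxOf_cons_self, List.idxOf_cons_ne _ h.ne, ← q.cons_tail_support,
        List.idxOf_cons_self]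
    · have hfst : a ≠ d.fst := fun h => hp.2 (h ▸ q.dart_fst_mem_support_of_mem_darts hd)
      have hsnd : a ≠ d.snd := fun h => hp.2 (h ▸ q.dart_snd_mem_support_of_mem_darts hd)
      rw [support_cons, List.idxOf_cons_ne _ hfst, List.idxOf_cons_ne _ hsnd, ih hp.1 hd]

theorem IsPath.nodup_map_toProd {p : G.Walk a b} (hp : p.IsPath) :
    (p.darts.map Dart.toProd).Nodup :=
  (darts_nodup_of_support_nodup hp.support_nodup).map Dart.toProd_injective

section DartProds

variable [DecidableEq V]

def dartProds (p : G.Walk a b) : Finset (V × V) :=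
  (p.darts.map Dart.toProd).toFinset

theorem IsPath.sum_dartProds {p : G.Walk a b} (hp : p.IsPath) (g : V × V → ℝ) :
    ∑ q ∈ p.dartProds, g q = (p.darts.map fun d => g d.toProd).sum := by
  rw [dartProds, List.sum_toFinset g hp.nodup_map_toProd, List.map_map]
  rfl

theorem IsPath.card_dartProds {p : G.Walk a b} (hp : p.IsPath) :
    #p.dartProds = p.length := by
  rw [dartProds, List.toFinset_card_of_nodup hp.nodup_map_toProd, List.length_map,
    length_darts]

theorem IsPath.sum_dartProds_sub {p : G.Walk a b} (hp : p.IsPath) (f : V → ℝ) :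
    ∑ q ∈ p.dartProds, (f q.2 - f q.1) = f b - f a := by
  rw [hp.sum_dartProds, ← p.sum_darts_sub f]

theorem mem_dartProds {p : G.Walk a b} {q : V × V} :
    q ∈ p.dartProds ↔ ∃ d ∈ p.darts, d.toProd = q := by
  simp [dartProds]

theorem IsPath.disjoint_dartProds_swap {p : G.Walk a b} (hp : p.IsPath) :
    Disjoint p.dartProds (p.dartProds.image Prod.swap) := by
  rw [Finset.disjoint_left]
  rintro _ hq hq'
  obtain ⟨d, hd, rfl⟩ := mem_dartProds.1 hq
  obtain ⟨_, hq'', hswap⟩ := Finset.mem_image.1 hq'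
  obtain ⟨d', hd', rfl⟩ := mem_dartProds.1 hq''
  have hedge : d'.edge = d.edge := by
    rw [Dart.edge, Dart.edge, ← hswap, Prod.swap, Sym2.eq_swap]
  obtain rfl : d' = d := List.inj_on_of_nodup_map hp.edges_nodup hd' hd hedge
  exact d'.adj.ne (congrArg Prod.snd hswap)

theorem mem_dartProds_union_swap_of_mem_edges {p : G.Walk a b} {q : V × V}
    (hq : s(q.1, q.2) ∈ p.edges) : q ∈ p.dartProds ∪ p.dartProds.image Prod.swap := by
  obtain ⟨d, hd, hedge⟩ := List.mem_map.1 hq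
  rcases dart_edge_eq_mk'_iff.1 hedge with h | h
  · exact Finset.mem_union_left _ (mem_dartProds.2 ⟨d, hd, h⟩)
  · exact Finset.mem_union_right _
      (Finset.mem_image.2 ⟨d.toProd, mem_dartProds.2 ⟨d, hd, rfl⟩, by rw [h]; rfl⟩)

end DartProds

open Classical in
noncomputable def firstReachableIdx (H : SimpleGraph V) (p : G.Walk a b) (v : V) : ℕ :=
  p.support.findIdx fun x => H.Reachable x v

theorem firstReachableIdx_eq_of_reachable {H : SimpleGraph V} (p : G.Walk a b) {v v' : V}
    (h : H.Reachable v v') : p.firstReachableIdx H v = p.firstReachableIdx H v' := by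
  have hiff : ∀ x, H.Reachable x v ↔ H.Reachable x v' := fun x => ⟨(·.trans h), (·.trans h.symm)⟩
  unfold firstReachableIdx
  exact le_antisymm (List.findIdx_le_findIdx fun x _ => by simp [hiff])
    (List.findIdx_le_findIdx fun x _ => by simp [hiff])

theorem firstReachableIdx_eq_idxOf [DecidableEq V] {H : SimpleGraph V} {p : G.Walk a b}
    (hcomb : ∀ x ∈ p.support, ∀ y ∈ p.support, x ≠ y → ¬ H.Reachable x y)
    {v : V} (hv : v ∈ p.support) : p.firstReachableIdx H v = p.support.idxOf v := by
  have hiff : ∀ x ∈ p.support, H.Reachable x v ↔ x = v := fun x hx =>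
    ⟨not_imp_not.1 (hcomb x hx v hv), fun h => h ▸ Reachable.refl x⟩
  unfold firstReachableIdx List.idxOf
  exact le_antisymm (List.findIdx_le_findIdx fun x hx => by simp [hiff x hx])
    (List.findIdx_le_findIdx fun x hx => by simp [hiff x hx])

theorem IsPath.exists_potential_of_comb [DecidableEq V] {p : G.Walk a b} (hp : p.IsPath)
    (hcomb : ∀ x ∈ p.support, ∀ y ∈ p.support, x ≠ y →
      ¬ (G.deleteEdges {e | e ∈ p.edges}).Reachable x y) :
    ∃ u : V → ℝ, u a = 0 ∧ u b = p.length ∧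
      (∀ x y, G.Adj x y → s(x, y) ∉ p.edges → u x = u y) ∧
      ∀ d ∈ p.darts, u d.snd - u d.fst = 1 := by
  have hidx {v : V} (hv : v ∈ p.support) := p.firstReachableIdx_eq_idxOf hcomb hv
  refine ⟨fun v => p.firstReachableIdx (G.deleteEdges {e | e ∈ p.edges}) v, ?_, ?_, ?_, ?_⟩
  · dsimp only
    rw [hidx p.start_mem_support, ← p.cons_tail_support, List.idxOf_cons_self, Nat.cast_zero]
  · dsimp only
    rw [hidx p.end_mem_support, hp.idxOf_end]
  · intro x y hadj hxy
    exact congrArg _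
      (p.firstReachableIdx_eq_of_reachable (deleteEdges_adj.2 ⟨hadj, hxy⟩).reachable)
  · intro d hd
    simp [hidx (p.dart_snd_mem_support_of_mem_darts hd),
      hidx (p.dart_fst_mem_support_of_mem_darts hd), hp.idxOf_snd_of_mem_darts hd]

end SimpleGraph.Walk

section Energy

variable {w : V → V → ℝ} {u : V → ℝ}

def edgeEnergy (w : V → V → ℝ) (u : V → ℝ) (q : V × V) : ℝ :=
  (u q.2 - u q.1) ^ 2 * w q.1 q.2

theorem energy_eq_half_sum_edgeEnergy [Fintype V] (w : V → V → ℝ) (u : V → ℝ) :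
    energy w u = (1 / 2) * ∑ q, edgeEnergy w u q := by
  rw [energy, Fintype.sum_prod_type]
  rfl

theorem energy_sub_const [Fintype V] (w : V → V → ℝ) (u : V → ℝ) (t : ℝ) :
    energy w (fun x => u x - t) = energy w u := by
  simp only [energy, sub_sub_sub_cancel_right]

theorem edgeEnergy_swap (hw_symm : ∀ x y, w x y = w y x) (q : V × V) :
    edgeEnergy w u q.swap = edgeEnergy w u q := by
  rw [edgeEnergy, edgeEnergy, Prod.fst_swap, Prod.snd_swap, hw_symm]
  ring

variable [Fintype V] [DecidableEq V] {D : Finset (V × V)}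

theorem energy_eq_sum_add_sum_compl (hw_symm : ∀ x y, w x y = w y x)
    (hD : Disjoint D (D.image Prod.swap)) :
    energy w u = ∑ q ∈ D, edgeEnergy w u q +
      (1 / 2) * ∑ q ∈ (D ∪ D.image Prod.swap)ᶜ, edgeEnergy w u q := by
  rw [energy_eq_half_sum_edgeEnergy, ← Finset.sum_add_sum_compl (D ∪ D.image Prod.swap),
    Finset.sum_union hD, Finset.sum_image fun _ _ _ _ h => Prod.swap_injective h]
  simp only [edgeEnergy_swap hw_symm]
  ring

theorem sum_edgeEnergy_le_energy (hw_symm : ∀ x y, w x y = w y x)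
    (hw_nonneg : ∀ x y, 0 ≤ w x y) (hD : Disjoint D (D.image Prod.swap)) :
    ∑ q ∈ D, edgeEnergy w u q ≤ energy w u := by
  rw [energy_eq_sum_add_sum_compl hw_symm hD, le_add_iff_nonneg_right]
  exact mul_nonneg (by norm_num) (Finset.sum_nonneg fun q _ =>
    mul_nonneg (sq_nonneg _) (hw_nonneg q.1 q.2))

theorem energy_eq_sum_edgeEnergy (hw_symm : ∀ x y, w x y = w y x)
    (hD : Disjoint D (D.image Prod.swap))
    (hzero : ∀ q ∉ D ∪ D.image Prod.swap, edgeEnergy w u q = 0) :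
    energy w u = ∑ q ∈ D, edgeEnergy w u q := by
  rw [energy_eq_sum_add_sum_compl hw_symm hD,
    Finset.sum_eq_zero fun q hq => hzero q (Finset.mem_compl.1 hq)]
  ring

end Energy

section PathEnergy

open SimpleGraph Walk

variable [Fintype V] [DecidableEq V] {G : SimpleGraph V} {w : V → V → ℝ} {a b : V}
  {p : G.Walk a b} {c : ℝ}

theorem mul_sq_sub_le_length_mul_energy (hw_symm : ∀ x y, w x y = w y x)
    (hw_nonneg : ∀ x y, 0 ≤ w x y) (hp : p.IsPath) (hpw : ∀ d ∈ p.darts, w d.fst d.snd = c)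
    (hc : 0 ≤ c) (v : V → ℝ) :
    c * (v b - v a) ^ 2 ≤ p.length * energy w v := by
  have hsum : ∑ q ∈ p.dartProds, edgeEnergy w v q =
      c * ∑ q ∈ p.dartProds, (v q.2 - v q.1) ^ 2 := by
    rw [Finset.mul_sum]
    refine Finset.sum_congr rfl fun q hq => ?_
    obtain ⟨d, hd, rfl⟩ := mem_dartProds.1 hq
    rw [edgeEnergy, hpw d hd, mul_comm]
  calc c * (v b - v a) ^ 2 = c * (∑ q ∈ p.dartProds, (v q.2 - v q.1)) ^ 2 := by
        rw [hp.sum_dartProds_sub]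
    _ ≤ c * (#p.dartProds * ∑ q ∈ p.dartProds, (v q.2 - v q.1) ^ 2) :=
        mul_le_mul_of_nonneg_left (sq_sum_le_card_mul_sum_sq ..) hc
    _ = p.length * ∑ q ∈ p.dartProds, edgeEnergy w v q := by
        rw [hsum, hp.card_dartProds]
        ring
    _ ≤ p.length * energy w v := mul_le_mul_of_nonneg_left
        (sum_edgeEnergy_le_energy hw_symm hw_nonneg hp.disjoint_dartProds_swap) (Nat.cast_nonneg _)

theorem energy_eq_length_mul (hw_symm : ∀ x y, w x y = w y x)
    (hw_zero : ∀ x y, ¬ G.Adj x y → w x y = 0) (hp : p.IsPath)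
    (hpw : ∀ d ∈ p.darts, w d.fst d.snd = c) {u : V → ℝ} {δ : ℝ}
    (hflat : ∀ x y, G.Adj x y → s(x, y) ∉ p.edges → u x = u y)
    (hstep : ∀ d ∈ p.darts, u d.snd - u d.fst = δ) :
    energy w u = p.length * (δ ^ 2 * c) := by
  rw [energy_eq_sum_edgeEnergy hw_symm hp.disjoint_dartProds_swap, ← hp.card_dartProds,
    ← nsmul_eq_mul, ← Finset.sum_const]
  · refine Finset.sum_congr rfl fun q hq => ?_
    obtain ⟨d, hd, rfl⟩ := mem_dartProds.1 hq
    rw [edgeEnergy, hpw d hd, ← hstep d hd]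
  · intro q hq
    by_cases hadj : G.Adj q.1 q.2
    · rw [edgeEnergy, hflat _ _ hadj fun h => hq (mem_dartProds_union_swap_of_mem_edges h)]
      ring
    · rw [edgeEnergy, hw_zero _ _ hadj, mul_zero]

end PathEnergy

theorem minEdgeWeight_nonneg {G : SimpleGraph V} {w : V → V → ℝ}
    (hw : ∀ x y, G.Adj x y → 0 ≤ w x y) : 0 ≤ minEdgeWeight G w :=
  Real.sInf_nonneg fun _ ⟨x, y, hxy, hr⟩ => hr ▸ hw x y hxy

theorem minBoundaryMeasure_pair [DecidableEq V] (m : V → ℝ) (x₀ x₁ : V) :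
    minBoundaryMeasure {x₀, x₁} m = min (m x₀) (m x₁) := by
  have hset : {r : ℝ | ∃ x ∈ ({x₀, x₁} : Finset V), m x = r} = {m x₀, m x₁} := by
    ext r
    simp [eq_comm]
  rw [minBoundaryMeasure, hset, csInf_pair]

theorem sigma2_pair_eq [Fintype V] [DecidableEq V] {x₀ x₁ : V} (hne : x₀ ≠ x₁) {m : V → ℝ}
    (hm : 0 < m x₀) (hmeq : m x₀ = m x₁) {w : V → V → ℝ} {k : ℝ}
    (hlow : ∀ v : V → ℝ, k * (v x₁ - v x₀) ^ 2 ≤ energy w v) {u : V → ℝ} (hu : u x₀ ≠ u x₁)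
    (hE : energy w u = k * (u x₁ - u x₀) ^ 2) :
    sigma2 {x₀, x₁} m w = 2 * k / m x₀ := by
  refine IsLeast.csInf_eq ⟨?_, ?_⟩
  · have hu' : u x₁ - u x₀ ≠ 0 := sub_ne_zero.2 hu.symm
    refine ⟨fun x => u x - (u x₀ + u x₁) / 2, ⟨x₀, Finset.mem_insert_self _ _, ?_⟩, ?_, ?_⟩
    · contrapose! hu'
      linarith
    · rw [Finset.sum_pair hne, ← hmeq]
      ring
    · have hden : (u x₀ - (u x₀ + u x₁) / 2) ^ 2 * m x₀ + (u x₁ - (u x₀ + u x₁) / 2) ^ 2 * m x₀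
          = (u x₁ - u x₀) ^ 2 * m x₀ / 2 := by ring
      rw [energy_sub_const, hE, Finset.sum_pair hne, ← hmeq, hden]
      field_simp
  · rintro _ ⟨v, ⟨x, hx, hvx⟩, hmean, rfl⟩
    rw [Finset.sum_pair hne, ← hmeq] at hmean
    have hv : v x₁ = -v x₀ := by
      have := mul_right_cancel₀ hm.ne' (show (v x₀ + v x₁) * m x₀ = 0 * m x₀ by linarith)
      linarith
    have hv₀ : v x₀ ≠ 0 := by
      rcases Finset.mem_insert.1 hx with rfl | hx
      · exact hvx
      · rw [Finset.mem_singleton.1 hx, hv, neg_ne_zero] at hvx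
        exact hvx
    rw [Finset.sum_pair hne, ← hmeq, hv, le_div_iff₀ (by positivity)]
    calc 2 * k / m x₀ * (v x₀ ^ 2 * m x₀ + (-v x₀) ^ 2 * m x₀) = k * (-v x₀ - v x₀) ^ 2 := by
          field_simp
          ring
      _ ≤ energy w v := hv ▸ hlow v

theorem extended_perrin_rigidity_converse_general [Fintype V] [DecidableEq V]
    (G : SimpleGraph V)
    (B : Finset V)
    (m : V → ℝ) (w : V → V → ℝ)
    (hm : ∀ x, 0 < m x)
    (hw_symm : ∀ x y, w x y = w y x)
    (hw_pos : ∀ x y, G.Adj x y → 0 < w x y)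
    (hw_zero : ∀ x y, ¬ G.Adj x y → w x y = 0)
    (x₀ x₁ : V) (hne : x₀ ≠ x₁) (hBeq : B = {x₀, x₁}) (hmeq : m x₀ = m x₁)
    (p : G.Walk x₀ x₁) (hp : p.IsPath) (hlen : p.length = boundaryDiam G B)
    (hpw : ∀ d ∈ p.darts, w d.toProd.1 d.toProd.2 = minEdgeWeight G w)
    (hcomb : ∀ x ∈ p.support, ∀ y ∈ p.support, x ≠ y →
      ¬ (G.deleteEdges {e | e ∈ p.edges}).Reachable x y) :
    sigma2 B m w =
      minEdgeWeight G w * (∑ x ∈ B, m x) /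
        (((∑ x ∈ B, m x) - minBoundaryMeasure B m) ^ 2 * (boundaryDiam G B : ℝ)) := by
  have hw_nonneg : ∀ x y, 0 ≤ w x y := fun x y =>
    (em (G.Adj x y)).elim (fun h => (hw_pos x y h).le) fun h => (hw_zero x y h).ge
  have hn : (0 : ℝ) < p.length :=
    Nat.cast_pos.2 (Nat.pos_of_ne_zero fun h => hne (p.eq_of_length_eq_zero h))
  have hlow (v : V → ℝ) : minEdgeWeight G w / p.length * (v x₁ - v x₀) ^ 2 ≤ energy w v := by
    rw [div_mul_eq_mul_div, div_le_iff₀ hn, mul_comm (energy w v)]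
    exact mul_sq_sub_le_length_mul_energy hw_symm hw_nonneg hp hpw
      (minEdgeWeight_nonneg fun x y h => (hw_pos x y h).le) v
  obtain ⟨u, hu₀, hu₁, hflat, hstep⟩ := hp.exists_potential_of_comb hcomb
  have hE : energy w u = minEdgeWeight G w / p.length * (u x₁ - u x₀) ^ 2 := by
    rw [energy_eq_length_mul hw_symm hw_zero hp hpw hflat hstep, hu₀, hu₁]
    field_simp
    ring
  have hu : u x₀ ≠ u x₁ := by
    rw [hu₀, hu₁]
    exact hn.ne
  rw [← hlen, hBeq, sigma2_pair_eq hne (hm x₀) hmeq hlow hu hE, minBoundaryMeasure_pair,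
    Finset.sum_pair hne, ← hmeq, min_self]
  field_simp
  ring

/-- **Converse of the rigidity theorem.**
If a connected weighted finite graph with boundary satisfies: (1) `B = {x₀, x₁}` with two
vertices of equal measure; (2) there is a unique path `p` joining `x₀` to `x₁`, of length
`d_B`, all of whose edge weights equal `w₀`; (3) `G` is a comb over `p`; then equality
`σ₂ = w₀ V_B / ((V_B - m₀)² d_B)` holds. -/
theorem extended_perrin_rigidity_converse [Fintype V] [DecidableEq V]
    (G : SimpleGraph V) (hG : G.Connected)
    (B : Finset V)
    (m : V → ℝ) (w : V → V → ℝ)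
    (hm : ∀ x, 0 < m x)
    (hw_symm : ∀ x y, w x y = w y x)
    (hw_pos : ∀ x y, G.Adj x y → 0 < w x y)
    (hw_zero : ∀ x y, ¬ G.Adj x y → w x y = 0)
    (x₀ x₁ : V) (hne : x₀ ≠ x₁) (hBeq : B = {x₀, x₁}) (hmeq : m x₀ = m x₁)
    (p : G.Walk x₀ x₁) (hp : p.IsPath) (hlen : p.length = boundaryDiam G B)
    (hpw : ∀ d ∈ p.darts, w d.toProd.1 d.toProd.2 = minEdgeWeight G w)
    (huniq : ∀ q : G.Walk x₀ x₁, q.IsPath → q = p)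
    (hcomb : ∀ x ∈ p.support, ∀ y ∈ p.support, x ≠ y →
      ¬ (G.deleteEdges {e | e ∈ p.edges}).Reachable x y) :
    sigma2 B m w =
      minEdgeWeight G w * (∑ x ∈ B, m x) /
        (((∑ x ∈ B, m x) - minBoundaryMeasure B m) ^ 2 * (boundaryDiam G B : ℝ)) :=
  extended_perrin_rigidity_converse_general G B m w hm hw_symm hw_pos hw_zero x₀ x₁ hne hBeq hmeq p
    hp hlen hpw hcomb
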